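/- Let G be a finite set of guides over a finite alphabet Σ with adjustment equivalence ∼. Then the set Z of all repetition-free slices for symbols of Σ and G is finite. Moreover, for every string u and every guided rewrite sequence ρ for u, there exists a slice sequence σ for u consisting of slices from Z only such that yield(σ) = yield(ρ). -/

import Mathlib

/-- A guided rewrite sequence for `u`: a list of guide-position pairs `(g, p)`
with `g ∈ G`, `p + |g| ≤ |u|` and `u[p+1, p+|g|] ∼ g`. -/
def IsRewriteSeq {α : Type} (sim : α → α → Prop) (G : Set (List α)) (u : List α)
    (ρ : List (List α × ℕ)) : Prop :=
  ∀ gp ∈ ρ, gp.1 ∈ G ∧ gp.2 + gp.1.length ≤ u.length ∧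
    List.Forall₂ sim ((u.drop gp.2).take gp.1.length) gp.1

/-- Apply a single guided rewrite `(g, p)` to `u`, replacing `u[p+1, p+|g|]` by `g`. -/
def applyRW {α : Type} (u : List α) (gp : List α × ℕ) : List α :=
  u.take gp.2 ++ gp.1 ++ u.drop (gp.2 + gp.1.length)

/-- The yield of a guided rewrite sequence: the final string `u_r`. -/
def rwYield {α : Type} (u : List α) (ρ : List (List α × ℕ)) : List α :=
  ρ.foldl applyRW u

/-- A slice for a symbol `a`: a finite sequence of guide-offset pairs `(g, q)`
with `g ∈ G`, `1 ≤ q ≤ |g|` and `a ∼ g[q]` (offsets are 1-based). -/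
def IsSlice {α : Type} (sim : α → α → Prop) (G : Set (List α))
    (sl : List (List α × ℕ)) (a : α) : Prop :=
  ∀ gq ∈ sl, gq.1 ∈ G ∧ 1 ≤ gq.2 ∧ gq.2 ≤ gq.1.length ∧
    ∃ b, gq.1[gq.2 - 1]? = some b ∧ sim a b

/-- The yield of a slice for the symbol `a`: the symbol `g[q]` of its last
guide-offset pair, or `a` itself if the slice is empty. -/
def sliceYield {α : Type} (a : α) (sl : List (List α × ℕ)) : α :=
  match sl.getLast? with
  | some gq => (gq.1[gq.2 - 1]?).getD a
  | none => a

/-- A start slice: all offsets equal `1`. -/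
def IsStartSlice {α : Type} (sl : List (List α × ℕ)) : Prop :=
  ∀ gq ∈ sl, gq.2 = 1

/-- An end slice: each offset equals the length of its guide. -/
def IsEndSlice {α : Type} (sl : List (List α × ℕ)) : Prop :=
  ∀ gq ∈ sl, gq.2 = gq.1.length

/-- `γ` is the cut for slices `sl` and `sl'`: a monotone partial injection from
the index set of `sl` to that of `sl'` with `γ(i) = j` iff `g_i = g'_j` and
`q_i + 1 = q'_j`; indexes outside the domain carry the last offset of their
guide, indexes outside the range carry offset `1`. -/
def IsCut {α : Type} (sl sl' : List (List α × ℕ)) (γ : ℕ → Option ℕ) : Prop :=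
  (∀ i j, γ i = some j → i < sl.length ∧ j < sl'.length) ∧
  (∀ i i' j j', γ i = some j → γ i' = some j' → i < i' → j < j') ∧
  (∀ (i : ℕ) (hi : i < sl.length) (j : ℕ) (hj : j < sl'.length),
      γ i = some j ↔
        (sl.get ⟨i, hi⟩).1 = (sl'.get ⟨j, hj⟩).1 ∧
        (sl.get ⟨i, hi⟩).2 + 1 = (sl'.get ⟨j, hj⟩).2) ∧
  (∀ (i : ℕ) (hi : i < sl.length), γ i = none →
      (sl.get ⟨i, hi⟩).2 = (sl.get ⟨i, hi⟩).1.length) ∧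
  (∀ (j : ℕ) (hj : j < sl'.length), (∀ i, γ i ≠ some j) →
      (sl'.get ⟨j, hj⟩).2 = 1)

/-- A slice sequence for `u`: one slice per position of `u`, the first being a
start slice, the last an end slice, and any two neighbouring slices being
related by a cut. -/
def IsSliceSeq {α : Type} (sim : α → α → Prop) (G : Set (List α)) (u : List α)
    (σ : List (List (List α × ℕ))) : Prop :=
  σ.length = u.length ∧
  (∀ (n : ℕ) (sl : List (List α × ℕ)) (a : α),
      σ[n]? = some sl → u[n]? = some a → IsSlice sim G sl a) ∧
  (∀ (n : ℕ) (sl sl' : List (List α × ℕ)),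
      σ[n]? = some sl → σ[n + 1]? = some sl' → ∃ γ, IsCut sl sl' γ) ∧
  (∀ sl, σ[0]? = some sl → IsStartSlice sl) ∧
  (∀ sl, σ[σ.length - 1]? = some sl → IsEndSlice sl)

/-- The yield of a slice sequence for `u`: the concatenation of the yields of
its slices (position `n` uses `u[n]` as default symbol). -/
def seqYield {α : Type} (u : List α) (σ : List (List (List α × ℕ))) : List α :=
  (u.zip σ).map (fun p => sliceYield p.1 p.2)

/-- A slice is repetition-free if no guide-offset pair occurs twice in it. -/
def RepetitionFree {α : Type} (sl : List (List α × ℕ)) : Prop := sl.Nodup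

/-!
The slice at position `n` lists the pairs `(g, n - p + 1)` of the distinct rewrites `(g, p)` of `ρ`
that cover `n`, in the order of their last application. A pair `(g, q)` at position `n` determines
its rewrite `(g, n + 1 - q)`, so slices are repetition-free; a rewrite covering both `n` and `n + 1`
links `(g, q)` to `(g, q + 1)`, and the links are monotone because neighbouring slices are sorted by
the same rewrites. The last pair of a slice comes from the last rewrite covering `n`, which also
decides the symbol that rewriting leaves at `n`. Finiteness holds because a repetition-free slice
is a duplicate-free list over the finite set of guide-offset pairs.
-/

theorem List.finite_setOf_nodup_forall_mem {β : Type*} {S : Set β} (hS : S.Finite) :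
    {l : List β | l.Nodup ∧ ∀ x ∈ l, x ∈ S}.Finite := by
  classical
  have := hS.fintype
  refine (Set.finite_range fun l : {l : List S // l.Nodup} => l.1.map Subtype.val).subset ?_
  rintro l ⟨hl, hlS⟩
  exact ⟨⟨l.pmap Subtype.mk hlS, hl.pmap fun _ _ _ _ => congrArg Subtype.val⟩,
    by simp [List.map_pmap]⟩

theorem List.Nodup.pairwise_idxOf_lt {β : Type*} [BEq β] [LawfulBEq β] {l : List β}
    (hl : l.Nodup) : l.Pairwise (l.idxOf · < l.idxOf ·) := by
  rw [List.pairwise_iff_getElem]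
  intro i j hi hj hij
  rwa [hl.idxOf_getElem, hl.idxOf_getElem]

theorem List.getLast?_filter_dedup {β : Type*} [DecidableEq β] (p : β → Bool) (l : List β) :
    (l.dedup.filter p).getLast? = (l.filter p).getLast? := by
  induction l with
  | nil => rfl
  | cons a l ih =>
    by_cases hpa : p a
    · by_cases ha : a ∈ l
      · have hne : l.filter p ≠ [] := List.ne_nil_of_mem (List.mem_filter.2 ⟨ha, hpa⟩)
        rw [List.dedup_cons_of_mem ha, ih, List.filter_cons_of_pos hpa, List.getLast?_cons,
          List.getLast?_eq_some_getLast hne, Option.getD_some]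
      · rw [List.dedup_cons_of_notMem ha, List.filter_cons_of_pos hpa,
          List.filter_cons_of_pos hpa, List.getLast?_cons, List.getLast?_cons, ih]
    · by_cases ha : a ∈ l
      · rw [List.dedup_cons_of_mem ha, ih, List.filter_cons_of_neg hpa]
      · rw [List.dedup_cons_of_notMem ha, List.filter_cons_of_neg hpa,
          List.filter_cons_of_neg hpa, ih]

theorem List.Pairwise.lt_of_key_lt {β ι : Type*} [LinearOrder ι] {k : β → ι} {l : List β}
    (hl : l.Pairwise (k · < k ·)) {i j : ℕ} (hi : i < l.length) (hj : j < l.length)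
    (hk : k l[i] < k l[j]) : i < j := by
  rw [List.pairwise_iff_getElem] at hl
  by_contra! hji
  rcases hji.eq_or_lt with rfl | hji
  · exact hk.false
  · exact (hk.trans (hl j i hj hi hji)).false

theorem exists_isCut {α : Type} {ι : Type*} [LinearOrder ι] {sl sl' : List (List α × ℕ)}
    (k k' : List α × ℕ → ι)
    (hsorted : sl.Pairwise (k · < k ·)) (hsorted' : sl'.Pairwise (k' · < k' ·))
    (hkey : ∀ x ∈ sl, (x.1, x.2 + 1) ∈ sl' → k' (x.1, x.2 + 1) = k x)
    (hlast : ∀ x ∈ sl, (x.1, x.2 + 1) ∉ sl' → x.2 = x.1.length)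
    (hfirst : ∀ y ∈ sl', y.2 = 1 ∨ ∃ x ∈ sl, (x.1, x.2 + 1) = y) :
    ∃ γ, IsCut sl sl' γ := by
  classical
  have hnodup' : sl'.Nodup := hsorted'.imp fun h => ne_of_apply_ne k' h.ne
  let γ : ℕ → Option ℕ := fun i => sl[i]?.bind fun x => sl'.idxOf? (x.1, x.2 + 1)
  have hγ : ∀ i j, γ i = some j ↔
      ∃ (hi : i < sl.length) (hj : j < sl'.length), sl'[j] = (sl[i].1, sl[i].2 + 1) := by
    intro i j
    simp only [γ, Option.bind_eq_some_iff, List.getElem?_eq_some_iff, List.idxOf?_eq_some_iff]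
    constructor
    · rintro ⟨x, ⟨hi, rfl⟩, hj, hjx, -⟩
      exact ⟨hi, hj, hjx⟩
    · rintro ⟨hi, hj, hjx⟩
      refine ⟨_, ⟨hi, rfl⟩, hj, hjx, fun j' hj' hj'x => ?_⟩
      have := hnodup'.getElem_inj_iff.1 (hj'x.trans hjx.symm)
      omega
  refine ⟨γ, ?_, ?_, ?_, ?_, ?_⟩
  · intro i j h
    obtain ⟨hi, hj, -⟩ := (hγ i j).1 h
    exact ⟨hi, hj⟩
  · intro i i' j j' h h' hii'
    obtain ⟨hi, hj, hij⟩ := (hγ i j).1 h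
    obtain ⟨hi', hj', hij'⟩ := (hγ i' j').1 h'
    refine hsorted'.lt_of_key_lt hj hj' ?_
    rw [hij, hij', hkey _ (List.getElem_mem hi) (hij ▸ List.getElem_mem hj),
      hkey _ (List.getElem_mem hi') (hij' ▸ List.getElem_mem hj')]
    exact List.pairwise_iff_getElem.1 hsorted i i' hi hi' hii'
  · intro i hi j hj
    rw [hγ]
    simp only [List.get_eq_getElem, Prod.ext_iff, exists_true_left, hi, hj]
    constructor <;> rintro ⟨h1, h2⟩ <;> exact ⟨h1.symm, h2.symm⟩
  · intro i hi h
    refine hlast _ (List.getElem_mem hi) fun hmem => ?_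
    obtain ⟨j, hj, hji⟩ := List.mem_iff_getElem.1 hmem
    simp [(hγ i j).2 ⟨hi, hj, hji⟩] at h
  · intro j hj h
    refine (hfirst _ (List.getElem_mem hj)).resolve_right ?_
    rintro ⟨x, hx, hxj⟩
    obtain ⟨i, hi, rfl⟩ := List.mem_iff_getElem.1 hx
    exact h i ((hγ i j).2 ⟨hi, hj, hxj.symm⟩)

section Rewriting

variable {α : Type}

theorem finite_setOf_guideOffset {G : Set (List α)} (hG : G.Finite) :
    {gq : List α × ℕ | gq.1 ∈ G ∧ gq.2 ≤ gq.1.length}.Finite :=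
  (hG.prod (hG.biUnion fun g _ => Set.finite_Iic g.length)).subset
    fun _ h => ⟨h.1, Set.mem_biUnion h.1 h.2⟩

def Covers (n : ℕ) (gp : List α × ℕ) : Prop := gp.2 ≤ n ∧ n < gp.2 + gp.1.length

instance (n : ℕ) : DecidablePred (Covers (α := α) n) := fun _ => instDecidableAnd

theorem length_applyRW {u : List α} {gp : List α × ℕ} (h : gp.2 + gp.1.length ≤ u.length) :
    (applyRW u gp).length = u.length := by
  simp only [applyRW, List.length_append, List.length_take, List.length_drop]
  omega

theorem getElem?_applyRW {u : List α} {gp : List α × ℕ} (h : gp.2 + gp.1.length ≤ u.length)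
    (n : ℕ) : (applyRW u gp)[n]? = if Covers n gp then gp.1[n - gp.2]? else u[n]? := by
  obtain ⟨g, p⟩ := gp
  simp only at h
  split_ifs with hc <;> simp only [Covers, not_and, not_lt] at hc <;>
    simp only [applyRW, List.getElem?_append, List.length_append, List.length_take,
      List.getElem?_take, List.getElem?_drop, min_eq_left (le_of_add_le_left h)] <;>
    split_ifs <;> first | omega | rfl | (congr 1; omega)

theorem rwYield_append_singleton (u : List α) (ρ : List (List α × ℕ)) (gp : List α × ℕ) :
    rwYield u (ρ ++ [gp]) = applyRW (rwYield u ρ) gp := by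
  simp [rwYield]

theorem length_rwYield {u : List α} {ρ : List (List α × ℕ)}
    (hfit : ∀ gp ∈ ρ, gp.2 + gp.1.length ≤ u.length) : (rwYield u ρ).length = u.length := by
  induction ρ using List.reverseRecOn with
  | nil => rfl
  | append_singleton ρ gp ih =>
    have ih := ih fun x hx => hfit x (List.mem_append_left _ hx)
    rw [rwYield_append_singleton, length_applyRW (ih ▸ hfit gp (by simp)), ih]

theorem getElem?_rwYield {u : List α} {ρ : List (List α × ℕ)}
    (hfit : ∀ gp ∈ ρ, gp.2 + gp.1.length ≤ u.length) (n : ℕ) :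
    (rwYield u ρ)[n]? = match (ρ.filter (Covers n ·)).getLast? with
      | some gp => gp.1[n - gp.2]?
      | none => u[n]? := by
  induction ρ using List.reverseRecOn with
  | nil => rfl
  | append_singleton ρ gp ih =>
    have hfit' : ∀ x ∈ ρ, x.2 + x.1.length ≤ u.length := fun x hx =>
      hfit x (List.mem_append_left _ hx)
    rw [rwYield_append_singleton,
      getElem?_applyRW (length_rwYield hfit' ▸ hfit gp (by simp)), ih hfit', List.filter_append]
    by_cases hn : Covers n gp <;> simp [hn]

theorem exists_sim_of_isRewriteSeq {sim : α → α → Prop} {G : Set (List α)} {u : List α}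
    {ρ : List (List α × ℕ)} (hρ : IsRewriteSeq sim G u ρ) {gp : List α × ℕ} (hgp : gp ∈ ρ)
    {n : ℕ} (hn : Covers n gp) {a : α} (ha : u[n]? = some a) :
    ∃ b, gp.1[n - gp.2]? = some b ∧ sim a b := by
  obtain ⟨-, hfit, hseg⟩ := hρ gp hgp
  obtain ⟨hn1, hn2⟩ := hn
  have hi : n - gp.2 < gp.1.length := by omega
  refine ⟨gp.1[n - gp.2], List.getElem?_eq_getElem hi, ?_⟩
  have := hseg.get (i := n - gp.2) (by simp only [List.length_take, List.length_drop]; omega) hi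
  simp only [List.get_eq_getElem, List.getElem_take, List.getElem_drop,
    Nat.add_sub_cancel' hn1] at this
  obtain ⟨-, rfl⟩ := List.getElem?_eq_some_iff.1 ha
  exact this

variable [DecidableEq α]

/-- `List.dedup` keeps last occurrences, so the pairs are ordered by the last application of their
rewrite. -/
def rewriteSlice (ρ : List (List α × ℕ)) (n : ℕ) : List (List α × ℕ) :=
  (ρ.dedup.filter (Covers n ·)).map fun gp => (gp.1, n - gp.2 + 1)

def rewriteSliceSeq (u : List α) (ρ : List (List α × ℕ)) : List (List (List α × ℕ)) :=
  (List.range u.length).map (rewriteSlice ρ)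

theorem mem_rewriteSlice {ρ : List (List α × ℕ)} {n : ℕ} {x : List α × ℕ} :
    x ∈ rewriteSlice ρ n ↔ ∃ gp ∈ ρ, Covers n gp ∧ (gp.1, n - gp.2 + 1) = x := by
  simp [rewriteSlice, and_assoc]

/-- The position in `ρ.dedup` of the rewrite that puts `x` into `rewriteSlice ρ n`. -/
def rewriteSliceKey (ρ : List (List α × ℕ)) (n : ℕ) (x : List α × ℕ) : ℕ :=
  ρ.dedup.idxOf (x.1, n + 1 - x.2)

theorem rewriteSliceKey_of_le {ρ : List (List α × ℕ)} {n : ℕ} {gp : List α × ℕ} (h : gp.2 ≤ n) :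
    rewriteSliceKey ρ n (gp.1, n - gp.2 + 1) = ρ.dedup.idxOf gp := by
  rw [rewriteSliceKey, show n + 1 - (n - gp.2 + 1) = gp.2 by omega]

theorem pairwise_rewriteSlice (ρ : List (List α × ℕ)) (n : ℕ) :
    (rewriteSlice ρ n).Pairwise (rewriteSliceKey ρ n · < rewriteSliceKey ρ n ·) := by
  rw [rewriteSlice, List.pairwise_map, List.pairwise_filter]
  refine (List.Nodup.pairwise_idxOf_lt (List.nodup_dedup ρ)).imp fun hlt hx hy => ?_
  rwa [rewriteSliceKey_of_le (of_decide_eq_true hx).1,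
    rewriteSliceKey_of_le (of_decide_eq_true hy).1]

theorem nodup_rewriteSlice (ρ : List (List α × ℕ)) (n : ℕ) : (rewriteSlice ρ n).Nodup :=
  (pairwise_rewriteSlice ρ n).imp fun h => ne_of_apply_ne _ h.ne

theorem exists_isCut_rewriteSlice (ρ : List (List α × ℕ)) (n : ℕ) :
    ∃ γ, IsCut (rewriteSlice ρ n) (rewriteSlice ρ (n + 1)) γ := by
  refine exists_isCut _ _ (pairwise_rewriteSlice ρ n) (pairwise_rewriteSlice ρ (n + 1))
    (fun x _ _ => by simp only [rewriteSliceKey]; congr 2; omega) ?_ ?_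
  · intro x hx hnext
    obtain ⟨gp, hgp, ⟨h1, h2⟩, rfl⟩ := mem_rewriteSlice.1 hx
    have hend : ¬n + 1 < gp.2 + gp.1.length := fun h =>
      hnext (mem_rewriteSlice.2 ⟨gp, hgp, ⟨by omega, h⟩, by simp only; congr 1; omega⟩)
    simp only; omega
  · intro y hy
    obtain ⟨gp, hgp, ⟨h1, h2⟩, rfl⟩ := mem_rewriteSlice.1 hy
    rcases Nat.lt_or_ge n gp.2 with hn | hn
    · left; simp only; omega
    · right
      exact ⟨_, mem_rewriteSlice.2 ⟨gp, hgp, ⟨hn, by omega⟩, rfl⟩, by simp only; congr 1; omega⟩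

theorem isSlice_rewriteSlice {sim : α → α → Prop} {G : Set (List α)} {u : List α}
    {ρ : List (List α × ℕ)} (hρ : IsRewriteSeq sim G u ρ) {n : ℕ} {a : α}
    (ha : u[n]? = some a) : IsSlice sim G (rewriteSlice ρ n) a := by
  intro x hx
  obtain ⟨gp, hgp, hn, rfl⟩ := mem_rewriteSlice.1 hx
  obtain ⟨b, hb, hab⟩ := exists_sim_of_isRewriteSeq hρ hgp hn ha
  obtain ⟨h1, h2⟩ := hn
  refine ⟨(hρ gp hgp).1, Nat.le_add_left _ _, by simp only; omega, b, ?_, hab⟩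
  rwa [Nat.add_sub_cancel]

theorem isStartSlice_rewriteSlice_zero (ρ : List (List α × ℕ)) :
    IsStartSlice (rewriteSlice ρ 0) := by
  intro x hx
  obtain ⟨gp, -, ⟨h1, -⟩, rfl⟩ := mem_rewriteSlice.1 hx
  simp only; omega

theorem isEndSlice_rewriteSlice {ρ : List (List α × ℕ)} {m : ℕ}
    (hfit : ∀ gp ∈ ρ, gp.2 + gp.1.length ≤ m) : IsEndSlice (rewriteSlice ρ (m - 1)) := by
  intro x hx
  obtain ⟨gp, hgp, ⟨h1, h2⟩, rfl⟩ := mem_rewriteSlice.1 hx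
  have := hfit gp hgp
  simp only; omega

theorem sliceYield_rewriteSlice {u : List α} {ρ : List (List α × ℕ)}
    (hfit : ∀ gp ∈ ρ, gp.2 + gp.1.length ≤ u.length) {n : ℕ} (hn : n < u.length) :
    some (sliceYield u[n] (rewriteSlice ρ n)) = (rwYield u ρ)[n]? := by
  rw [getElem?_rwYield hfit, sliceYield, rewriteSlice, List.getLast?_map,
    List.getLast?_filter_dedup]
  rcases h : (ρ.filter (Covers n ·)).getLast? with _ | gp
  · simp [hn]
  · obtain ⟨h1, h2⟩ : Covers n gp :=
      of_decide_eq_true (List.mem_filter.1 (List.mem_of_getLast? h)).2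
    simp [List.getElem?_eq_getElem (show n - gp.2 < gp.1.length by omega)]

theorem getElem?_rewriteSliceSeq_eq_some {u : List α} {ρ : List (List α × ℕ)} {n : ℕ}
    {sl : List (List α × ℕ)} :
    (rewriteSliceSeq u ρ)[n]? = some sl ↔ n < u.length ∧ rewriteSlice ρ n = sl := by
  simp [rewriteSliceSeq, List.getElem?_eq_some_iff]

theorem isSliceSeq_rewriteSliceSeq {sim : α → α → Prop} {G : Set (List α)} {u : List α}
    {ρ : List (List α × ℕ)} (hρ : IsRewriteSeq sim G u ρ) :
    IsSliceSeq sim G u (rewriteSliceSeq u ρ) := by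
  have hlen : (rewriteSliceSeq u ρ).length = u.length := by simp [rewriteSliceSeq]
  refine ⟨hlen, ?_, ?_, ?_, ?_⟩
  · intro n sl a hsl ha
    obtain ⟨-, rfl⟩ := getElem?_rewriteSliceSeq_eq_some.1 hsl
    exact isSlice_rewriteSlice hρ ha
  · intro n sl sl' hsl hsl'
    obtain ⟨-, rfl⟩ := getElem?_rewriteSliceSeq_eq_some.1 hsl
    obtain ⟨-, rfl⟩ := getElem?_rewriteSliceSeq_eq_some.1 hsl'
    exact exists_isCut_rewriteSlice ρ n
  · intro sl hsl
    obtain ⟨-, rfl⟩ := getElem?_rewriteSliceSeq_eq_some.1 hsl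
    exact isStartSlice_rewriteSlice_zero ρ
  · intro sl hsl
    rw [hlen] at hsl
    obtain ⟨-, rfl⟩ := getElem?_rewriteSliceSeq_eq_some.1 hsl
    exact isEndSlice_rewriteSlice fun gp hgp => (hρ gp hgp).2.1

theorem seqYield_rewriteSliceSeq {u : List α} {ρ : List (List α × ℕ)}
    (hfit : ∀ gp ∈ ρ, gp.2 + gp.1.length ≤ u.length) :
    seqYield u (rewriteSliceSeq u ρ) = rwYield u ρ := by
  refine List.ext_getElem? fun n => ?_
  rcases Nat.lt_or_ge n u.length with hn | hn
  · rw [← sliceYield_rewriteSlice hfit hn]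
    simp [seqYield, rewriteSliceSeq, hn]
  · rw [List.getElem?_eq_none (by simpa [seqYield, rewriteSliceSeq] using hn),
      List.getElem?_eq_none (by rwa [length_rwYield hfit])]

end Rewriting

theorem finitely_many_repetitionFree_slices_general
    {α : Type} (sim : α → α → Prop)
    (G : Set (List α)) (hG : G.Finite) :
    Set.Finite {sl : List (List α × ℕ) |
        RepetitionFree sl ∧ ∃ a : α, IsSlice sim G sl a} ∧
    ∀ (u : List α) (ρ : List (List α × ℕ)), IsRewriteSeq sim G u ρ →
      ∃ σ : List (List (List α × ℕ)), IsSliceSeq sim G u σ ∧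
        (∀ sl ∈ σ, RepetitionFree sl ∧ ∃ a : α, IsSlice sim G sl a) ∧
        seqYield u σ = rwYield u ρ := by
  classical
  refine ⟨(List.finite_setOf_nodup_forall_mem (finite_setOf_guideOffset hG)).subset ?_,
    fun u ρ hρ => ⟨rewriteSliceSeq u ρ, isSliceSeq_rewriteSliceSeq hρ, ?_,
      seqYield_rewriteSliceSeq fun gp hgp => (hρ gp hgp).2.1⟩⟩
  · rintro sl ⟨hnodup, a, hsl⟩
    exact ⟨hnodup, fun gq hgq => ⟨(hsl gq hgq).1, (hsl gq hgq).2.2.1⟩⟩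
  · intro sl hsl
    obtain ⟨n, hn, rfl⟩ := List.mem_map.1 hsl
    have hn : n < u.length := List.mem_range.1 hn
    exact ⟨nodup_rewriteSlice ρ n, u[n], isSlice_rewriteSlice hρ (List.getElem?_eq_getElem hn)⟩

/-- The set `Z` of all repetition-free slices for symbols of
`Σ` and guides from the finite set `G` is finite; moreover every guided rewrite
sequence `ρ` for a string `u` admits a slice sequence `σ` for `u` consisting of
slices from `Z` only, with `yield(σ) = yield(ρ)`. -/
theorem finitely_many_repetitionFree_slices
    {α : Type} [Fintype α] (sim : α → α → Prop) (hsim : Equivalence sim)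
    (G : Set (List α)) (hG : G.Finite) :
    Set.Finite {sl : List (List α × ℕ) |
        RepetitionFree sl ∧ ∃ a : α, IsSlice sim G sl a} ∧
    ∀ (u : List α) (ρ : List (List α × ℕ)), IsRewriteSeq sim G u ρ →
      ∃ σ : List (List (List α × ℕ)), IsSliceSeq sim G u σ ∧
        (∀ sl ∈ σ, RepetitionFree sl ∧ ∃ a : α, IsSlice sim G sl a) ∧
        seqYield u σ = rwYield u ρ :=
  finitely_many_repetitionFree_slices_general sim G hG
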